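/- arXiv:0904.1253 — 6 statements merged into one kernel-verified Lean document; each statement's English description precedes it below -/
import Mathlib

section
/- Let d ≥ 2, let X and A₁, …, A_{d-1} be finite sets, and for each 1 ≤ i ≤ d−1 let g_i : X → A_i be a function. Then (∏_{i=1}^{d-1} |A_i|) · |{(x₁,…,x_d) ∈ X^d : g_i(x_i) = g_i(x_{i+1}) for all 1 ≤ i ≤ d−1}| ≥ |X|^d. -/
/-!
Let `c x` count the chains starting at `x`. Splitting off the first step gives
`c x = ∑_{g₁ y = g₁ x} c' y`, where `c'` counts chains for `g₂, …, g_{d-1}`. The ratios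
`c' y / c y` sum to `1` over each nonempty fibre of `g₁`, hence to at most `|A₁|` in total, so
AM-GM applied to them gives `|X| ^ |X| * ∏ c' ≤ |A₁| ^ |X| * ∏ c`. Iterating, the geometric mean
of `c` is at least `|X| ^ (d - 1) / ∏ |Aᵢ|`, and a last AM-GM bounds the number of chains `∑ c`
below by `|X|` times this geometric mean.
-/

open Finset

theorem card_pow_card_mul_prod_le_sum_pow {ι : Type*} (s : Finset ι) (z : ι → ℝ)
    (hz : ∀ i ∈ s, 0 ≤ z i) :
    (#s : ℝ) ^ #s * ∏ i ∈ s, z i ≤ (∑ i ∈ s, z i) ^ #s := by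
  rcases s.eq_empty_or_nonempty with rfl | hs
  · simp
  have hn : (0 : ℝ) < #s := by exact_mod_cast hs.card_pos
  have amgm := Real.geom_mean_le_arith_mean_weighted s (fun _ => (#s : ℝ)⁻¹) z
    (fun _ _ => by positivity) (by simp [hn.ne']) hz
  rw [Real.finsetProd_rpow s z hz, ← Finset.mul_sum] at amgm
  calc (#s : ℝ) ^ #s * ∏ i ∈ s, z i
      = (#s : ℝ) ^ #s * ((∏ i ∈ s, z i) ^ (#s : ℝ)⁻¹) ^ #s := by
        rw [Real.rpow_inv_natCast_pow (prod_nonneg hz) hs.card_pos.ne']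
    _ ≤ (#s : ℝ) ^ #s * ((#s : ℝ)⁻¹ * ∑ i ∈ s, z i) ^ #s := by
        gcongr
        exact Real.rpow_nonneg (prod_nonneg hz) _
    _ = (∑ i ∈ s, z i) ^ #s := by
        rw [mul_pow, ← mul_assoc, ← mul_pow, mul_inv_cancel₀ hn.ne', one_pow, one_mul]

section Fibers

variable {X A : Type*} [Fintype X] [Fintype A] [DecidableEq A]

theorem sum_div_sum_fiber_le_card (g : X → A) (f : X → ℝ) :
    ∑ y, f y / ∑ x ∈ {x | g x = g y}, f x ≤ Fintype.card A :=
  calc ∑ y, f y / ∑ x ∈ {x | g x = g y}, f x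
      = ∑ a, ∑ y ∈ {y | g y = a}, f y / ∑ x ∈ {x | g x = a}, f x := by
        rw [← sum_fiberwise univ g]
        exact sum_congr rfl fun a _ => sum_congr rfl fun y hy => by rw [(mem_filter.1 hy).2]
    _ = ∑ a, (∑ y ∈ {y | g y = a}, f y) / ∑ x ∈ {x | g x = a}, f x := by simp only [sum_div]
    _ ≤ ∑ _a : A, 1 := sum_le_sum fun a _ => div_self_le_one _
    _ = Fintype.card A := by simp

theorem card_pow_mul_prod_le_card_pow_mul_prod_sum_fiber (g : X → A) (f : X → ℝ)
    (hf : ∀ x, 0 < f x) :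
    (Fintype.card X : ℝ) ^ Fintype.card X * ∏ x, f x ≤
      (Fintype.card A : ℝ) ^ Fintype.card X * ∏ y, ∑ x ∈ {x | g x = g y}, f x := by
  set F : X → ℝ := fun y => ∑ x ∈ {x | g x = g y}, f x
  have hF : ∀ y, 0 < F y := fun y => sum_pos (fun x _ => hf x) ⟨y, by simp⟩
  have amgm := card_pow_card_mul_prod_le_sum_pow univ (fun y => f y / F y)
    fun y _ => (div_pos (hf y) (hF y)).le
  rw [card_univ, prod_div_distrib] at amgm
  have := amgm.trans (pow_le_pow_left₀ (sum_nonneg fun y _ => (div_pos (hf y) (hF y)).le)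
    (sum_div_sum_fiber_le_card g f) _)
  rwa [mul_div_assoc', div_le_iff₀ (prod_pos fun y _ => hF y)] at this

end Fibers

section Chains

variable {X : Type*} [Fintype X] {k : ℕ}

def chains {A : Fin k → Type*} [∀ i, DecidableEq (A i)] (g : ∀ i, X → A i) :
    Finset (Fin (k + 1) → X) :=
  {c | ∀ i : Fin k, g i (c i.castSucc) = g i (c i.succ)}

def chainCount [DecidableEq X] {A : Fin k → Type*} [∀ i, DecidableEq (A i)]
    (g : ∀ i, X → A i) (x : X) : ℕ :=
  #{c ∈ chains g | c 0 = x}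

theorem cons_mem_chains {A : Fin (k + 1) → Type*} [∀ i, DecidableEq (A i)]
    {g : ∀ i, X → A i} {x : X} {c : Fin (k + 1) → X} :
    Fin.cons x c ∈ chains g ↔ g 0 x = g 0 (c 0) ∧ c ∈ chains fun i => g i.succ := by
  simp [chains, Fin.forall_fin_succ]

theorem chainCount_pos [DecidableEq X] {A : Fin k → Type*} [∀ i, DecidableEq (A i)]
    (g : ∀ i, X → A i) (x : X) : 0 < chainCount g x :=
  card_pos.2 ⟨fun _ => x, by simp [chains]⟩

theorem chainCount_zero [DecidableEq X] {A : Fin 0 → Type*} [∀ i, DecidableEq (A i)]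
    (g : ∀ i, X → A i) (x : X) : chainCount g x = 1 := by
  rw [chainCount, card_eq_one]
  refine ⟨fun _ => x, ?_⟩
  ext c
  simp [chains, funext_iff, Fin.forall_fin_one]

theorem chainCount_succ [DecidableEq X] {A : Fin (k + 1) → Type*} [∀ i, DecidableEq (A i)]
    (g : ∀ i, X → A i) (x : X) :
    chainCount g x = ∑ y ∈ {y | g 0 y = g 0 x}, chainCount (fun i => g i.succ) y := by
  have tail_bij : chainCount g x = #{c ∈ chains (fun i => g i.succ) | g 0 (c 0) = g 0 x} := by
    refine card_bij' (fun c _ => Fin.tail c) (fun c _ => (Fin.cons x c : Fin (k + 2) → X))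
      (fun c hc => ?_) (fun c hc => ?_) (fun c hc => ?_) (fun c _ => by simp)
    · obtain ⟨hchain, rfl⟩ := mem_filter.1 hc
      rw [← Fin.cons_self_tail c, cons_mem_chains] at hchain
      exact mem_filter.2 ⟨hchain.2, hchain.1.symm⟩
    · obtain ⟨hchain, hx⟩ := mem_filter.1 hc
      exact mem_filter.2 ⟨cons_mem_chains.2 ⟨hx.symm, hchain⟩, by simp⟩
    · obtain ⟨-, rfl⟩ := mem_filter.1 hc
      exact Fin.cons_self_tail c
  rw [tail_bij, card_eq_sum_card_fiberwise (f := fun c => c 0) (t := {y | g 0 y = g 0 x})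
    fun c hc => by simpa using (mem_filter.1 hc).2]
  refine sum_congr rfl fun y hy => ?_
  rw [chainCount, filter_filter]
  refine congrArg card (filter_congr fun c _ => ?_)
  simp only [mem_filter, mem_univ, true_and] at hy
  constructor
  · exact And.right
  · rintro rfl; exact ⟨hy, rfl⟩

theorem card_chains [DecidableEq X] {A : Fin k → Type*} [∀ i, DecidableEq (A i)]
    (g : ∀ i, X → A i) :
    #(chains g) = ∑ x, chainCount g x :=
  card_eq_sum_card_fiberwise fun _ _ => mem_univ _

theorem card_pow_pow_card_le_mul_prod_chainCount [DecidableEq X] {A : Fin k → Type*}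
    [∀ i, Fintype (A i)] [∀ i, DecidableEq (A i)] (g : ∀ i, X → A i) :
    ((Fintype.card X : ℝ) ^ k) ^ Fintype.card X ≤
      (∏ i, (Fintype.card (A i) : ℝ)) ^ Fintype.card X * ∏ x, (chainCount g x : ℝ) := by
  induction k with
  | zero => simp [chainCount_zero]
  | succ k ih =>
    set n := Fintype.card X
    have step := card_pow_mul_prod_le_card_pow_mul_prod_sum_fiber (g 0)
      (fun y => (chainCount (fun i => g i.succ) y : ℝ)) fun y => mod_cast chainCount_pos _ y
    simp only [← Nat.cast_sum, ← chainCount_succ] at step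
    calc ((n : ℝ) ^ (k + 1)) ^ n = (n : ℝ) ^ n * ((n : ℝ) ^ k) ^ n := by ring
      _ ≤ (n : ℝ) ^ n * ((∏ i : Fin k, (Fintype.card (A i.succ) : ℝ)) ^ n *
            ∏ x, (chainCount (fun i => g i.succ) x : ℝ)) := by gcongr; exact ih _
      _ = (∏ i : Fin k, (Fintype.card (A i.succ) : ℝ)) ^ n *
            ((n : ℝ) ^ n * ∏ x, (chainCount (fun i => g i.succ) x : ℝ)) := by ring
      _ ≤ (∏ i : Fin k, (Fintype.card (A i.succ) : ℝ)) ^ n *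
            ((Fintype.card (A 0) : ℝ) ^ n * ∏ x, (chainCount g x : ℝ)) := by gcongr
      _ = (∏ i, (Fintype.card (A i) : ℝ)) ^ n * ∏ x, (chainCount g x : ℝ) := by
        rw [Fin.prod_univ_succ]; ring

end Chains

theorem katz_tao_chains_general {k : ℕ} {X : Type*} [Fintype X]
    (A : Fin k → Type*) [∀ i, Fintype (A i)] (g : ∀ i, X → A i) :
    Nat.card X ^ (k + 1) ≤
      (∏ i, Nat.card (A i)) *
        Nat.card {x : Fin (k + 1) → X // ∀ i : Fin k, g i (x i.castSucc) = g i (x i.succ)} := by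
  classical
  rcases isEmpty_or_nonempty X with _ | _
  · simp
  set n := Fintype.card X
  have amgm := card_pow_card_mul_prod_le_sum_pow univ (fun x => (chainCount g x : ℝ))
    fun x _ => by positivity
  rw [card_univ, ← Nat.cast_sum, ← card_chains] at amgm
  have hpow : ((n : ℝ) ^ (k + 1)) ^ n ≤ ((∏ i, (Fintype.card (A i) : ℝ)) * #(chains g)) ^ n :=
    calc ((n : ℝ) ^ (k + 1)) ^ n = (n : ℝ) ^ n * ((n : ℝ) ^ k) ^ n := by ring
      _ ≤ (n : ℝ) ^ n * ((∏ i, (Fintype.card (A i) : ℝ)) ^ n * ∏ x, (chainCount g x : ℝ)) := by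
        gcongr; exact card_pow_pow_card_le_mul_prod_chainCount g
      _ = (∏ i, (Fintype.card (A i) : ℝ)) ^ n * ((n : ℝ) ^ n * ∏ x, (chainCount g x : ℝ)) := by
        ring
      _ ≤ (∏ i, (Fintype.card (A i) : ℝ)) ^ n * (#(chains g) : ℝ) ^ n := by gcongr
      _ = ((∏ i, (Fintype.card (A i) : ℝ)) * #(chains g)) ^ n := by ring
  have hle := (pow_le_pow_iff_left₀ (by positivity) (by positivity) Fintype.card_ne_zero).1 hpow
  simp only [Nat.card_eq_fintype_card, Fintype.card_subtype]
  exact_mod_cast hle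

/-- Katz–Tao chain lemma: for `d = k + 1 ≥ 2`, finite sets `X`, `A₁, …, A_k` and
functions `gᵢ : X → Aᵢ`, the number of chains `(x₁,…,x_d) ∈ X^d` with
`gᵢ(xᵢ) = gᵢ(x_{i+1})` for all `i` satisfies
`(∏ᵢ |Aᵢ|) · #chains ≥ |X|^d`. -/
theorem katz_tao_chains {k : ℕ} (hk : 1 ≤ k) {X : Type*} [Fintype X]
    (A : Fin k → Type*) [∀ i, Fintype (A i)] (g : ∀ i, X → A i) :
    Nat.card X ^ (k + 1) ≤
      (∏ i, Nat.card (A i)) *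
        Nat.card {x : Fin (k + 1) → X // ∀ i : Fin k, g i (x i.castSucc) = g i (x i.succ)} :=
  katz_tao_chains_general A g
end

section
/- Let X and A₁, …, A_k be finite sets (k ≥ 2), let f_j : X → A_j be functions for 1 ≤ j ≤ k, and let 1 ≤ m ≤ k. Let ℋ := {(x,y) ∈ X × X : f₁(x) = f₁(y)}. If the map H : ℋ → A₂ × … × A_k defined by H(x,y) := (f₂(x), …, f_m(x), f_{m+1}(y), …, f_k(y)) is injective, then |X|² ≤ ∏_{j=1}^k |A_j|. -/
/-!
Write `ℋ` for the fibre product of `f₁` with itself. Counting `X` and `ℋ` fibrewise over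
`A₁` gives `|X| = ∑ₐ nₐ` and `|ℋ| = ∑ₐ nₐ²`, so Cauchy–Schwarz yields the Katz–Tao pair
bound `|X|² ≤ |A₁| · |ℋ|`. Injectivity of `H` bounds `|ℋ|` by `∏_{j ≥ 2} |A_j|`.
-/

open Finset

section

variable {X Y Z : Type*}

def Function.pullbackEquivSigma (f : X → Y) (g : Z → Y) :
    f.Pullback g ≃ Σ y, {x // f x = y} × {z // g z = y} where
  toFun p := ⟨f p.1.1, ⟨p.1.1, rfl⟩, ⟨p.1.2, p.2.symm⟩⟩
  invFun q := ⟨(q.2.1, q.2.2), q.2.1.2.trans q.2.2.2.symm⟩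
  left_inv _ := rfl
  right_inv := by
    rintro ⟨y, ⟨x, rfl⟩, z, _⟩
    rfl

variable [Fintype X] [Fintype Y] [Fintype Z] [DecidableEq Y]

theorem Function.card_pullback (f : X → Y) (g : Z → Y) :
    Fintype.card (f.Pullback g) =
      ∑ y, Fintype.card {x // f x = y} * Fintype.card {z // g z = y} := by
  rw [Fintype.card_congr (f.pullbackEquivSigma g), Fintype.card_sigma]
  simp only [Fintype.card_prod]

theorem Fintype.card_eq_sum_card_fiber (f : X → Y) :
    Fintype.card X = ∑ y, Fintype.card {x // f x = y} := by
  rw [← Fintype.card_sigma, Fintype.card_congr (Equiv.sigmaFiberEquiv f)]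

theorem Function.card_sq_le_card_mul_card_pullbackSelf (f : X → Y) :
    Fintype.card X ^ 2 ≤ Fintype.card Y * Fintype.card f.PullbackSelf := by
  rw [Fintype.card_eq_sum_card_fiber f, Function.card_pullback f f]
  simpa only [sq, card_univ, Nat.cast_id] using
    sq_sum_le_card_mul_sum_sq (s := univ) (f := fun y ↦ Fintype.card {x // f x = y})

end

/-- Abstract counting statement for the case `d = 2`.  Here `A j` (for `j : Fin k`)
plays the role of `A_{j+1}`, and `f j : X → A j` of `f_{j+1}`.  The set `ℋ` consists of
pairs `(x,y)` with `f₁ x = f₁ y`, and the map `H` sends `(x,y)` to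
`(f₂ x, …, f_m x, f_{m+1} y, …, f_k y)` (an index `j : Fin k` with `j ≠ 0` contributes
the entry `f j x` if `j.val + 1 ≤ m` and `f j y` otherwise).  If `H` is injective, then
`|X|² ≤ ∏_{j=1}^k |A_j|`. -/
theorem counting_d_two {k m : ℕ} (hk : 2 ≤ k)
    {X : Type*} [Fintype X] (A : Fin k → Type*) [∀ j, Fintype (A j)]
    (f : ∀ j : Fin k, X → A j)
    (hH : Function.Injective
      (fun (p : {p : X × X // f ⟨0, by omega⟩ p.1 = f ⟨0, by omega⟩ p.2}) =>
        fun (j : {j : Fin k // j.val ≠ 0}) =>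
          if j.1.val + 1 ≤ m then f j.1 p.1.1 else f j.1 p.1.2)) :
    Nat.card X ^ 2 ≤ ∏ j, Nat.card (A j) := by
  classical
  set i₀ : Fin k := ⟨0, by omega⟩
  have hprod : ∏ j, Fintype.card (A j) =
      Fintype.card (A i₀) * Fintype.card (∀ j : {j : Fin k // j.val ≠ 0}, A j) := by
    rw [Fintype.prod_eq_mul_prod_subtype_ne _ i₀, Fintype.card_pi]
    congr 1
    exact Fintype.prod_equiv (Equiv.subtypeEquivRight fun j ↦ by simp [i₀, Fin.ext_iff]) _ _
      fun _ ↦ rfl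
  simp only [Nat.card_eq_fintype_card, hprod]
  calc Fintype.card X ^ 2 ≤ Fintype.card (A i₀) * Fintype.card (f i₀).PullbackSelf :=
        Function.card_sq_le_card_mul_card_pullbackSelf (f i₀)
    _ ≤ _ := Nat.mul_le_mul_left _ (Fintype.card_le_of_injective _ hH)
end

section
/- Let d ≥ 3 be odd and m ≥ 2, let X and A₁, …, A_{m+1} be finite sets, and let f_j : X → A_j be functions for 1 ≤ j ≤ m+1. Let 𝒞 := {(x₁,…,x_d) ∈ X^d : f₁(x_i) = f₁(x_{i+1}) for all odd i with 1 ≤ i ≤ d−1, and f₂(x_i) = f₂(x_{i+1}) for all even i with 1 ≤ i ≤ d−1}. If the map H on 𝒞 defined by H(x₁,…,x_d) := ((f_j(x_i))_{3 ≤ j ≤ m, 1 ≤ i ≤ d}, (f_{m+1}(x_i))_{i odd, 1 ≤ i ≤ d}) is injective, then |X|^d ≤ (|A₁| · |A₂|)^{(d-1)/2} · (∏_{j=3}^{m} |A_j|)^d · |A_{m+1}|^{(d+1)/2}. -/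
/-!
Katz–Tao chain argument. Greedily deleting every point whose `g₁`- or `g₂`-fibre has fewer
than `θᵢ ≈ |X| / (4 |Bᵢ|)` points loses at most half of `X`; from each surviving point a chain
can then be continued in at least `θ₁`, resp. `θ₂`, ways, so
`|X|^(2e+1) ≤ 2 · 16^e · (|B₁| |B₂|)^e · #chains`. Chains for the coordinatewise maps on `X^N`
are `N`-tuples of chains, so applying this on `X^N` and letting `N → ∞` removes the constant
`2 · 16^e`. Injectivity of `H` bounds the number of chains by the size of its codomain.
-/

open Finset

lemma Nat.div_mul_mul_le_div (x a n : ℕ) : x / (a * n) * n ≤ x / a := by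
  rw [← Nat.div_div_eq_div_mul]
  exact Nat.div_mul_le_self _ _

lemma Nat.le_of_forall_pow_le_mul_pow {a b C : ℕ} (h : ∀ N, b ^ N ≤ C * a ^ N) : b ≤ a := by
  by_contra! hab
  rcases Nat.eq_zero_or_pos a with rfl | ha
  · simpa [hab.ne'] using h 1
  have hba : (1 : ℝ) < b / a := (one_lt_div (by positivity)).2 (by exact_mod_cast hab)
  obtain ⟨N, hN⟩ := pow_unbounded_of_one_lt (C : ℝ) hba
  rw [div_pow, lt_div_iff₀ (by positivity)] at hN
  exact (h N).not_gt (by exact_mod_cast hN)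

lemma Nat.card_fin_mod_two_eq_zero (e : ℕ) :
    Nat.card {i : Fin (2 * e + 1) // i.val % 2 = 0} = e + 1 :=
  Nat.card_eq_of_equiv_fin
    { toFun i := ⟨i.1 / 2, by omega⟩
      invFun k := ⟨⟨2 * k, by omega⟩, by simp⟩
      left_inv i := by ext; simp only; omega
      right_inv k := by ext; simp }

lemma Finset.prod_range_two_mul_ite {M : Type*} [CommMonoid M] (a b : M) (e : ℕ) :
    ∏ k ∈ range (2 * e), (if k % 2 = 0 then a else b) = (a * b) ^ e := by
  induction e with
  | zero => simp
  | succ e ih =>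
    rw [Nat.mul_succ, prod_range_succ, prod_range_succ, ih, pow_succ]
    simp [Nat.add_mod, mul_assoc]

section Cleaning

variable {X B B₁ B₂ : Type*} [DecidableEq B] [DecidableEq B₁] [DecidableEq B₂]

lemma Finset.card_image_filter_ne_lt {S : Finset X} {x : X} (hx : x ∈ S) (g : X → B) :
    #((S.filter (fun y => g y ≠ g x)).image g) < #(S.image g) :=
  card_lt_card <| (ssubset_iff_of_subset (image_subset_image (filter_subset _ _))).2
    ⟨g x, mem_image_of_mem g hx, by simp⟩

lemma card_add_mul_card_image_le_of_card_fiber_le {S : Finset X} {x : X} (hx : x ∈ S)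
    (g : X → B) {θ : ℕ} (hθ : #(S.filter (fun y => g y = g x)) ≤ θ) :
    #S + θ * #((S.filter (fun y => g y ≠ g x)).image g) ≤
      #(S.filter (fun y => g y ≠ g x)) + θ * #(S.image g) := by
  have hsplit : #(S.filter (fun y => g y = g x)) + #(S.filter (fun y => g y ≠ g x)) = #S :=
    card_filter_add_card_filter_not _
  have himage := Nat.mul_le_mul_left θ (card_image_filter_ne_lt hx g)
  rw [Nat.mul_succ] at himage
  omega

theorem exists_subset_lt_card_fiber (g₁ : X → B₁) (g₂ : X → B₂) (θ₁ θ₂ : ℕ) (S : Finset X) :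
    ∃ T ⊆ S,
      (∀ x ∈ T, θ₁ < #(T.filter (fun y => g₁ y = g₁ x)) ∧
        θ₂ < #(T.filter (fun y => g₂ y = g₂ x))) ∧
      #S ≤ #T + θ₁ * #(S.image g₁) + θ₂ * #(S.image g₂) := by
  induction S using Finset.strongInduction with
  | H S ih =>
    by_cases hS : ∃ x ∈ S, #(S.filter (fun y => g₁ y = g₁ x)) ≤ θ₁ ∨
        #(S.filter (fun y => g₂ y = g₂ x)) ≤ θ₂
    · obtain ⟨x, hx, hsmall | hsmall⟩ := hS
      · obtain ⟨T, hTS, hT, hcard⟩ :=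
          ih (S.filter (fun y => g₁ y ≠ g₁ x)) (filter_ssubset.2 ⟨x, hx, by simp⟩)
        refine ⟨T, hTS.trans (filter_subset _ _), hT, ?_⟩
        have := card_add_mul_card_image_le_of_card_fiber_le hx g₁ hsmall
        have := Nat.mul_le_mul_left θ₂ <| card_le_card <|
          image_subset_image (f := g₂) (filter_subset (fun y => g₁ y ≠ g₁ x) S)
        omega
      · obtain ⟨T, hTS, hT, hcard⟩ :=
          ih (S.filter (fun y => g₂ y ≠ g₂ x)) (filter_ssubset.2 ⟨x, hx, by simp⟩)
        refine ⟨T, hTS.trans (filter_subset _ _), hT, ?_⟩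
        have := card_add_mul_card_image_le_of_card_fiber_le hx g₂ hsmall
        have := Nat.mul_le_mul_left θ₁ <| card_le_card <|
          image_subset_image (f := g₁) (filter_subset (fun y => g₂ y ≠ g₂ x) S)
        omega
    · simp only [not_exists, not_and, not_or, not_le] at hS
      exact ⟨S, subset_refl S, hS, by omega⟩

end Cleaning

section Walks

variable {X : Type*} (R : ℕ → X → X → Prop) (T : Finset X)

def IsWalkIn {n : ℕ} (x : Fin (n + 1) → X) : Prop :=
  (∀ i, x i ∈ T) ∧ ∀ i : Fin n, R i (x i.castSucc) (x i.succ)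

variable {R T}

lemma IsWalkIn.snoc [∀ k, DecidableRel (R k)] {n : ℕ} {w : Fin (n + 1) → X} (hw : IsWalkIn R T w)
    {y : X} (hy : y ∈ T.filter (R n (w (Fin.last n)))) :
    IsWalkIn R T (Fin.snoc (α := fun _ => X) w y) := by
  rw [mem_filter] at hy
  refine ⟨Fin.lastCases (by simpa using hy.1) (fun i => by simpa using hw.1 i), ?_⟩
  refine Fin.lastCases (by simpa using hy.2) (fun i => ?_)
  rw [Fin.succ_castSucc, Fin.snoc_castSucc, Fin.snoc_castSucc]
  exact hw.2 i

theorem card_mul_prod_le_card_walks [Fintype X] [∀ k, DecidableRel (R k)] {θ : ℕ → ℕ}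
    (hθ : ∀ k, ∀ x ∈ T, θ k ≤ #(T.filter (R k x))) (n : ℕ) :
    #T * ∏ k ∈ range n, θ k ≤ Nat.card {x : Fin (n + 1) → X // IsWalkIn R T x} := by
  classical
  induction n with
  | zero =>
    rw [prod_range_zero, mul_one, ← Nat.card_eq_finsetCard]
    refine Nat.card_le_card_of_injective (fun y => ⟨fun _ => y, fun _ => y.2, fun i => i.elim0⟩) ?_
    intro y y' h
    exact Subtype.ext (congrFun (congrArg Subtype.val h) 0)
  | succ n ih =>
    let extend : (Σ w : {x : Fin (n + 1) → X // IsWalkIn R T x},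
        T.filter (R n (w.1 (Fin.last n)))) → {x : Fin (n + 2) → X // IsWalkIn R T x} :=
      fun p => ⟨Fin.snoc p.1.1 p.2.1, p.1.2.snoc p.2.2⟩
    have hextend : Function.Injective extend := by
      rintro ⟨w, y⟩ ⟨w', y'⟩ h
      obtain rfl : w = w' :=
        Subtype.ext (by simpa [extend] using congrArg (Fin.init ∘ Subtype.val) h)
      obtain rfl : y = y' :=
        Subtype.ext (by simpa [extend] using congrArg (fun x => x.1 (Fin.last _)) h)
      rfl
    calc #T * ∏ k ∈ range (n + 1), θ k
        ≤ Nat.card {x : Fin (n + 1) → X // IsWalkIn R T x} * θ n := by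
          rw [prod_range_succ, ← mul_assoc]; exact Nat.mul_le_mul_right _ ih
      _ ≤ ∑ w : {x : Fin (n + 1) → X // IsWalkIn R T x}, #(T.filter (R n (w.1 (Fin.last n)))) := by
          rw [Nat.card_eq_fintype_card, ← smul_eq_mul, ← card_univ, ← sum_const]
          exact sum_le_sum fun w _ => hθ n _ (w.2.1 _)
      _ = Nat.card (Σ w : {x : Fin (n + 1) → X // IsWalkIn R T x},
            T.filter (R n (w.1 (Fin.last n)))) := by
          rw [Nat.card_sigma]; simp only [Nat.card_eq_finsetCard]
      _ ≤ _ := Nat.card_le_card_of_injective extend hextend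

end Walks

section AltChain

variable {X B₁ B₂ : Type*} (g₁ : X → B₁) (g₂ : X → B₂)

def IsAltChain {e : ℕ} (x : Fin (2 * e + 1) → X) : Prop :=
  ∀ i : Fin (2 * e),
    (i.val % 2 = 0 → g₁ (x i.castSucc) = g₁ (x i.succ)) ∧
    (i.val % 2 = 1 → g₂ (x i.castSucc) = g₂ (x i.succ))

abbrev AltChain (e : ℕ) : Type _ := {x : Fin (2 * e + 1) → X // IsAltChain g₁ g₂ x}

variable {g₁ g₂}

theorem card_mul_pow_le_card_altChain [Fintype X] [DecidableEq B₁] [DecidableEq B₂]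
    {T : Finset X} {θ₁ θ₂ : ℕ}
    (hT : ∀ x ∈ T, θ₁ ≤ #(T.filter (fun y => g₁ y = g₁ x)) ∧
      θ₂ ≤ #(T.filter (fun y => g₂ y = g₂ x))) (e : ℕ) :
    #T * (θ₁ * θ₂) ^ e ≤ Nat.card (AltChain g₁ g₂ e) := by
  classical
  let R : ℕ → X → X → Prop := fun k x y => if k % 2 = 0 then g₁ y = g₁ x else g₂ y = g₂ x
  have hwalks := card_mul_prod_le_card_walks (R := R) (T := T)
    (θ := fun k => if k % 2 = 0 then θ₁ else θ₂)
    (fun k x hx => by by_cases hk : k % 2 = 0 <;> simp [R, hk, hT x hx]) (2 * e)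
  rw [prod_range_two_mul_ite] at hwalks
  refine hwalks.trans (Nat.card_le_card_of_injective _ (Subtype.impEmbedding _ _ ?_).injective)
  intro x hx i
  have hR := hx.2 i
  exact ⟨fun hi => Eq.symm (by simpa [R, hi] using hR),
    fun hi => Eq.symm (by simpa [R, hi] using hR)⟩

end AltChain

section CardAltChain

variable {X B₁ B₂ : Type*}

theorem card_pow_le_const_mul_card_altChain [Fintype X] [Fintype B₁] [Fintype B₂]
    (g₁ : X → B₁) (g₂ : X → B₂) (e : ℕ) :
    Nat.card X ^ (2 * e + 1) ≤
      2 * 16 ^ e * (Nat.card B₁ * Nat.card B₂) ^ e * Nat.card (AltChain g₁ g₂ e) := by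
  classical
  set n := Nat.card X
  rcases Nat.eq_zero_or_pos n with hn | hn
  · simp [hn]
  have : Nonempty X := Nat.card_pos_iff.1 hn |>.1
  set n₁ := Nat.card B₁
  set n₂ := Nat.card B₂
  have hB₁ : 0 < n₁ := Nat.card_pos_iff.2 ⟨⟨g₁ (Classical.arbitrary X)⟩, inferInstance⟩
  have hB₂ : 0 < n₂ := Nat.card_pos_iff.2 ⟨⟨g₂ (Classical.arbitrary X)⟩, inferInstance⟩
  obtain ⟨T, -, hT, hcard⟩ :=
    exists_subset_lt_card_fiber g₁ g₂ (n / (4 * n₁)) (n / (4 * n₂)) univ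
  have hchains := card_mul_pow_le_card_altChain (g₁ := g₁) (g₂ := g₂)
    (θ₁ := n / (4 * n₁) + 1) (θ₂ := n / (4 * n₂) + 1) hT e
  have hnT : n ≤ 2 * #T := by
    have h₁ : #(univ.image g₁) ≤ n₁ := (card_le_univ _).trans_eq Nat.card_eq_fintype_card.symm
    have h₂ : #(univ.image g₂) ≤ n₂ := (card_le_univ _).trans_eq Nat.card_eq_fintype_card.symm
    have := Nat.mul_le_mul_left (n / (4 * n₁)) h₁
    have := Nat.mul_le_mul_left (n / (4 * n₂)) h₂
    have := Nat.div_mul_mul_le_div n 4 n₁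
    have := Nat.div_mul_mul_le_div n 4 n₂
    rw [card_univ, ← Nat.card_eq_fintype_card] at hcard
    omega
  have hθ₁ : n ≤ 4 * n₁ * (n / (4 * n₁) + 1) := (Nat.lt_mul_div_succ n (by omega)).le
  have hθ₂ : n ≤ 4 * n₂ * (n / (4 * n₂) + 1) := (Nat.lt_mul_div_succ n (by omega)).le
  generalize n / (4 * n₁) + 1 = θ₁ at hchains hθ₁
  generalize n / (4 * n₂) + 1 = θ₂ at hchains hθ₂
  calc n ^ (2 * e + 1) = n * (n * n) ^ e := by ring
    _ ≤ 2 * #T * ((4 * n₁ * θ₁) * (4 * n₂ * θ₂)) ^ e := by gcongr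
    _ = 2 * 16 ^ e * (n₁ * n₂) ^ e * (#T * (θ₁ * θ₂) ^ e) := by ring
    _ ≤ _ := by gcongr

def altChainPiEquiv {g₁ : X → B₁} {g₂ : X → B₂} (ι : Type*) (e : ℕ) :
    AltChain (fun (v : ι → X) j => g₁ (v j)) (fun (v : ι → X) j => g₂ (v j)) e ≃
      (ι → AltChain g₁ g₂ e) where
  toFun x j := ⟨fun i => x.1 i j, fun i =>
    ⟨fun h => congrFun ((x.2 i).1 h) j, fun h => congrFun ((x.2 i).2 h) j⟩⟩
  invFun F := ⟨fun i j => (F j).1 i, fun i =>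
    ⟨fun h => funext fun j => ((F j).2 i).1 h, fun h => funext fun j => ((F j).2 i).2 h⟩⟩
  left_inv _ := rfl
  right_inv _ := rfl

theorem card_pow_le_mul_card_altChain [Fintype X] [Fintype B₁] [Fintype B₂]
    (g₁ : X → B₁) (g₂ : X → B₂) (e : ℕ) :
    Nat.card X ^ (2 * e + 1) ≤ (Nat.card B₁ * Nat.card B₂) ^ e * Nat.card (AltChain g₁ g₂ e) := by
  refine Nat.le_of_forall_pow_le_mul_pow (C := 2 * 16 ^ e) fun N => ?_
  have h := card_pow_le_const_mul_card_altChain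
    (fun (v : Fin N → X) j => g₁ (v j)) (fun (v : Fin N → X) j => g₂ (v j)) e
  simp only [Nat.card_congr (altChainPiEquiv (Fin N) e), Nat.card_fun, Nat.card_fin] at h
  calc (Nat.card X ^ (2 * e + 1)) ^ N = (Nat.card X ^ N) ^ (2 * e + 1) := by ring
    _ ≤ _ := h
    _ = _ := by ring

end CardAltChain

/-- Abstract counting statement for odd `n` and odd dimension `d = 2e + 1 ≥ 3`.
Here `A j` (for `j : Fin (m+1)`) plays the role of `A_{j+1}` and `f j` of `f_{j+1}`.
`𝒞` is the set of chains `(x₁,…,x_d) ∈ X^d` whose consecutive constraints alternate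
between `f₁` (for odd `i`, i.e. `i.val` even in `0`-based indexing) and `f₂`
(for even `i`).  The map `H` records the entries `(f_j(x_i))_{3 ≤ j ≤ m, 1 ≤ i ≤ d}`
together with `(f_{m+1}(x_i))` for the odd (1-based) indices `i`.  If `H` is injective,
then `|X|^d ≤ (|A₁|·|A₂|)^{(d-1)/2} · (∏_{j=3}^m |A_j|)^d · |A_{m+1}|^{(d+1)/2}`. -/
theorem counting_odd_n_odd_d {e m : ℕ} (hm : 2 ≤ m)
    {X : Type*} [Fintype X] (A : Fin (m + 1) → Type*) [∀ j, Fintype (A j)]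
    (f : ∀ j : Fin (m + 1), X → A j)
    (hH : Function.Injective
      (fun (x : {x : Fin (2 * e + 1) → X //
          ∀ i : Fin (2 * e),
            (i.val % 2 = 0 → f ⟨0, by omega⟩ (x i.castSucc) = f ⟨0, by omega⟩ (x i.succ)) ∧
            (i.val % 2 = 1 → f ⟨1, by omega⟩ (x i.castSucc) = f ⟨1, by omega⟩ (x i.succ))}) =>
        ((fun (i : Fin (2 * e + 1)) (j : {j : Fin (m + 1) // 2 ≤ j.val ∧ j.val < m}) =>
            f j.1 (x.1 i)),
         (fun (i : {i : Fin (2 * e + 1) // i.val % 2 = 0}) => f (Fin.last m) (x.1 i.1))))) :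
    Nat.card X ^ (2 * e + 1) ≤
      (Nat.card (A ⟨0, by omega⟩) * Nat.card (A ⟨1, by omega⟩)) ^ e *
        (∏ j ∈ Finset.univ.filter (fun j : Fin (m + 1) => 2 ≤ j.val ∧ j.val < m),
          Nat.card (A j)) ^ (2 * e + 1) *
        Nat.card (A (Fin.last m)) ^ (e + 1) := by
  have hchains := card_pow_le_mul_card_altChain (f ⟨0, by omega⟩) (f ⟨1, by omega⟩) e
  have hH := Nat.card_le_card_of_injective _ hH
  rw [Nat.card_prod, Nat.card_fun, Nat.card_fun, Nat.card_pi, Nat.card_fin,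
    Nat.card_fin_mod_two_eq_zero] at hH
  rw [mul_assoc, prod_subtype (p := fun j : Fin (m + 1) => 2 ≤ j.val ∧ j.val < m) _ (by simp)]
  exact hchains.trans (Nat.mul_le_mul_left _ hH)
end

section
/- Let n ≥ 1 and 1 ≤ m ≤ n, let X and A₁, …, A_n be finite sets, and let f_i : X → A_i be functions for 1 ≤ i ≤ n. Suppose that for every subset S ⊆ {1,…,n} with |S| = m, the map x ↦ (f_i(x))_{i ∈ S} from X to ∏_{i∈S} A_i is injective. Then |X|^n ≤ (∏_{i=1}^{n} |A_i|)^m. -/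
/-!
Cover the indices `Fin n = ℤ/nℤ` by the `n` cyclic windows `{j, j + 1, …, j + m - 1}`. Each window
has `m` elements, so `|X| ≤ ∏_{i ∈ window} |Aᵢ|`; multiplying these `n` bounds gives
`|X|ⁿ ≤ ∏ᵢ |Aᵢ|^{dᵢ}`, where `dᵢ = m` is the number of windows containing `i`.
-/

open Finset Function

theorem Finset.prod_prod_eq_prod_pow_card_filter_mem {ι J M : Type*} [CommMonoid M] [Fintype ι]
    [Fintype J] [DecidableEq ι] (S : J → Finset ι) (a : ι → M) :
    ∏ j, ∏ i ∈ S j, a i = ∏ i, a i ^ #{j | i ∈ S j} := by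
  rw [prod_congr rfl fun j _ => (prod_ite_mem_eq (S j) a).symm, prod_comm]
  exact prod_congr rfl fun i _ => by rw [← prod_filter, prod_const]

section Translates

variable {G : Type*} [AddGroup G] [Fintype G] [DecidableEq G]

theorem Finset.card_filter_sub_right_mem (T : Finset G) (j : G) : #{i | i - j ∈ T} = #T :=
  card_equiv (Equiv.subRight j) (by simp)

theorem Finset.card_filter_sub_left_mem (T : Finset G) (i : G) : #{j | i - j ∈ T} = #T :=
  card_equiv (Equiv.subLeft i) (by simp)

end Translates

section Cover

variable {ι X : Type*} {A : ι → Type*} [∀ i, Finite (A i)]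

theorem Nat.card_le_prod_card_of_injective_restrict (f : ∀ i, X → A i) (S : Finset ι)
    (hS : Injective fun (x : X) (i : S) => f i.1 x) :
    Nat.card X ≤ ∏ i ∈ S, Nat.card (A i) :=
  calc Nat.card X ≤ Nat.card (∀ i : S, A i.1) := Nat.card_le_card_of_injective _ hS
    _ = ∏ i ∈ S, Nat.card (A i) := by rw [Nat.card_pi, prod_coe_sort S fun i => Nat.card (A i)]

theorem Nat.card_pow_le_prod_card_pow_of_card_filter_mem_eq {J : Type*} [Fintype ι] [Fintype J]
    [DecidableEq ι] (f : ∀ i, X → A i) (S : J → Finset ι) {k : ℕ}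
    (hk : ∀ i, #{j | i ∈ S j} = k) (hS : ∀ j, Injective fun (x : X) (i : S j) => f i.1 x) :
    Nat.card X ^ Fintype.card J ≤ (∏ i, Nat.card (A i)) ^ k :=
  calc Nat.card X ^ Fintype.card J = ∏ _j : J, Nat.card X := (prod_const _).symm
    _ ≤ ∏ j, ∏ i ∈ S j, Nat.card (A i) :=
      prod_le_prod' fun j _ => Nat.card_le_prod_card_of_injective_restrict f (S j) (hS j)
    _ = (∏ i, Nat.card (A i)) ^ k := by
      rw [prod_prod_eq_prod_pow_card_filter_mem, prod_congr rfl fun i _ => congrArg _ (hk i),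
        prod_pow]

end Cover

theorem rank_m_counting_general {n m : ℕ} (hn : 1 ≤ n) (hmn : m ≤ n)
    {X : Type*} (A : Fin n → Type*) [∀ i, Fintype (A i)]
    (f : ∀ i : Fin n, X → A i)
    (h : ∀ S : Finset (Fin n), S.card = m →
      Function.Injective (fun (x : X) (i : {i // i ∈ S}) => f i.1 x)) :
    Nat.card X ^ n ≤ (∏ i, Nat.card (A i)) ^ m := by
  have : NeZero n := ⟨by omega⟩
  let T : Finset (Fin n) := {d | d < m}
  have hT : #T = m := by simpa [T, Fin.card_filter_val_lt] using hmn
  simpa only [Fintype.card_fin] using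
    Nat.card_pow_le_prod_card_pow_of_card_filter_mem_eq f (fun j => {i | i - j ∈ T})
    (fun i => by simpa [hT] using card_filter_sub_left_mem T i)
    (fun j => h _ ((card_filter_sub_right_mem T j).trans hT))

/-- Single-scale rank-`m` counting heuristic: if `f i : X → A i` for `i : Fin n` are
such that for every `m`-element subset `S` of the indices the map
`x ↦ (f i x)_{i ∈ S}` is injective, then `|X|^n ≤ (∏ᵢ |Aᵢ|)^m`. -/
theorem rank_m_counting {n m : ℕ} (hn : 1 ≤ n) (hm1 : 1 ≤ m) (hmn : m ≤ n)
    {X : Type*} [Fintype X] (A : Fin n → Type*) [∀ i, Fintype (A i)]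
    (f : ∀ i : Fin n, X → A i)
    (h : ∀ S : Finset (Fin n), S.card = m →
      Function.Injective (fun (x : X) (i : {i // i ∈ S}) => f i.1 x)) :
    Nat.card X ^ n ≤ (∏ i, Nat.card (A i)) ^ m :=
  rank_m_counting_general hn hmn A f h
end

section
/- There exist a constant c > 0 and N₀ such that for every integer N ≥ N₀ and every integer n with N/100 ≤ n ≤ N, |∫₀¹ exp(2πi(N x² − n x)) dx| ≥ c N^{-1/2}. -/
/-!
Completing the square, `N x² - n x = N (x - a)² - N a²` with `a = n / (2N) ∈ [1/200, 1/2]`,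
and substituting `u = √(2πN) (x - a)` turn the integral into `(2πN)^{-1/2}` times a unimodular
factor times the truncated Fresnel integral `∫_{-A}^{B} e^{iu²} du`, where `A, B ≥ 13/10` once
`N` is large. On `[-T, T]` the real part of that integral is at least `∫ (1 - u⁴/2) = 2T - T⁵/5`,
while each tail is at most `1/T` after one integration by parts, since
`e^{iu²} = (e^{iu²})' / (2iu)`. With `T = 13/10` this leaves `‖∫_{-A}^{B} e^{iu²} du‖ ≥ 3/10`.
-/

open Complex intervalIntegral

noncomputable def fresnelPhase (x : ℝ) : ℂ := cexp (x ^ 2 * I)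

@[fun_prop]
lemma continuous_fresnelPhase : Continuous fresnelPhase := by
  unfold fresnelPhase; fun_prop

@[simp]
lemma norm_fresnelPhase (x : ℝ) : ‖fresnelPhase x‖ = 1 := by
  rw [fresnelPhase, ← ofReal_pow, norm_exp_ofReal_mul_I]

lemma re_fresnelPhase (x : ℝ) : (fresnelPhase x).re = Real.cos (x ^ 2) := by
  rw [fresnelPhase, ← ofReal_pow, exp_ofReal_mul_I_re]

lemma fresnelPhase_neg (x : ℝ) : fresnelPhase (-x) = fresnelPhase x := by
  simp [fresnelPhase]

lemma hasDerivAt_fresnelPhase (x : ℝ) :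
    HasDerivAt fresnelPhase (fresnelPhase x * (2 * x * I)) x :=
  (((hasDerivAt_pow 2 (x : ℂ)).mul_const I).cexp).comp_ofReal.congr_deriv (by
    simp [fresnelPhase])

lemma integral_inv_two_mul_sq {a b : ℝ} (ha : 0 < a) (hab : a ≤ b) :
    ∫ x in a..b, (2 * x ^ 2)⁻¹ = (2 * a)⁻¹ - (2 * b)⁻¹ := by
  have hpos : ∀ x ∈ Set.uIcc a b, 0 < x := fun x hx =>
    ha.trans_le (Set.uIcc_of_le hab ▸ hx).1
  have hderiv : ∀ x ∈ Set.uIcc a b, HasDerivAt (fun y => -(2 * y)⁻¹) (2 * x ^ 2)⁻¹ x := by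
    intro x hx
    have hx0 := (hpos x hx).ne'
    have := (((hasDerivAt_id x).const_mul 2).inv (by simpa using hx0)).neg
    exact this.congr_deriv (by simp; field_simp)
  have hcont : ContinuousOn (fun x : ℝ => (2 * x ^ 2)⁻¹) (Set.uIcc a b) :=
    continuousOn_const.mul (continuousOn_pow 2) |>.inv₀ fun x hx =>
      mul_ne_zero two_ne_zero (pow_ne_zero 2 (hpos x hx).ne')
  rw [integral_eq_sub_of_hasDerivAt hderiv hcont.intervalIntegrable]
  ring

lemma norm_integral_fresnelPhase_le {a b : ℝ} (ha : 0 < a) (hab : a ≤ b) :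
    ‖∫ x in a..b, fresnelPhase x‖ ≤ a⁻¹ := by
  have hpos : ∀ x ∈ Set.uIcc a b, 0 < x := fun x hx =>
    ha.trans_le (Set.uIcc_of_le hab ▸ hx).1
  set u : ℝ → ℂ := fun x => -I / (2 * x)
  set u' : ℝ → ℂ := fun x => I / (2 * x ^ 2)
  have hu : ∀ x ∈ Set.uIcc a b, HasDerivAt u (u' x) x := by
    intro x hx
    have hx0 : (x : ℂ) ≠ 0 := ofReal_ne_zero.mpr (hpos x hx).ne'
    have := ((((hasDerivAt_id (x : ℂ)).const_mul 2).inv (by simpa using hx0)).const_mul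
      (-I)).comp_ofReal
    exact this.congr_deriv (by simp [u']; field_simp)
  have hu'_cont : ContinuousOn u' (Set.uIcc a b) := fun x hx => by
    have hx0 : x ≠ 0 := (hpos x hx).ne'
    exact (continuousAt_const.div (by fun_prop) (by simpa)).continuousWithinAt
  have hparts := integral_mul_deriv_eq_deriv_mul hu (fun x _ => hasDerivAt_fresnelPhase x)
    hu'_cont.intervalIntegrable
    ((by fun_prop : Continuous fun x : ℝ => fresnelPhase x * (2 * x * I)).intervalIntegrable _ _)
  have hcancel : Set.EqOn (fun x => u x * (fresnelPhase x * (2 * x * I))) fresnelPhase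
      (Set.uIcc a b) := by
    intro x hx
    have hx0 : (x : ℂ) ≠ 0 := ofReal_ne_zero.mpr (hpos x hx).ne'
    simp only [u]
    field_simp
    simp
  rw [integral_congr hcancel] at hparts
  have hb : 0 < b := ha.trans_le hab
  have hboundary : ∀ x, 0 < x → ‖u x * fresnelPhase x‖ = (2 * x)⁻¹ := fun x hx => by
    simp [u, abs_of_pos hx]
  have hbulk : ‖∫ x in a..b, u' x * fresnelPhase x‖ ≤ (2 * a)⁻¹ - (2 * b)⁻¹ := by
    rw [← integral_inv_two_mul_sq ha hab]
    refine (norm_integral_le_integral_norm hab).trans_eq (integral_congr fun x hx => ?_)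
    simp [u']
  calc ‖∫ x in a..b, fresnelPhase x‖
      ≤ ‖u b * fresnelPhase b‖ + ‖u a * fresnelPhase a‖
          + ‖∫ x in a..b, u' x * fresnelPhase x‖ := by
        rw [hparts]; exact norm_sub_le_of_le (norm_sub_le _ _) le_rfl
    _ ≤ (2 * b)⁻¹ + (2 * a)⁻¹ + ((2 * a)⁻¹ - (2 * b)⁻¹) := by
        rw [hboundary b hb, hboundary a ha]; gcongr
    _ = a⁻¹ := by ring

lemma le_re_integral_fresnelPhase_neg_self {T : ℝ} (hT : 0 ≤ T) :
    2 * T - T ^ 5 / 5 ≤ (∫ x in -T..T, fresnelPhase x).re := by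
  have hcos : ∫ x in -T..T, (1 - x ^ 4 / 2) ≤ ∫ x in -T..T, Real.cos (x ^ 2) := by
    refine integral_mono_on (by linarith) ((Continuous.intervalIntegrable (by fun_prop) _ _))
      ((Continuous.intervalIntegrable (by fun_prop) _ _)) fun x _ => ?_
    have := Real.one_sub_sq_div_two_le_cos (x := x ^ 2)
    linarith [show (x ^ 2) ^ 2 = x ^ 4 by ring]
  have hpoly : ∫ x in -T..T, (1 - x ^ 4 / 2) = 2 * T - T ^ 5 / 5 := by
    rw [integral_sub intervalIntegrable_const ((Continuous.intervalIntegrable (by fun_prop) _ _)),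
      integral_div, integral_const, integral_pow]
    simp
    ring
  have hre : ∫ x in -T..T, Real.cos (x ^ 2) = (∫ x in -T..T, fresnelPhase x).re := by
    simpa [re_fresnelPhase] using
      intervalIntegral_re (continuous_fresnelPhase.intervalIntegrable (-T) T)
  linarith

lemma le_norm_integral_fresnelPhase {T A B : ℝ} (hT : 0 < T) (hA : T ≤ A) (hB : T ≤ B) :
    2 * T - T ^ 5 / 5 - 2 * T⁻¹ ≤ ‖∫ x in -A..B, fresnelPhase x‖ := by
  have hint : ∀ a b : ℝ, IntervalIntegrable fresnelPhase MeasureTheory.volume a b :=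
    continuous_fresnelPhase.intervalIntegrable
  have hleft : ‖∫ x in -A..-T, fresnelPhase x‖ ≤ T⁻¹ := by
    rw [← integral_comp_neg]
    simpa [fresnelPhase_neg] using norm_integral_fresnelPhase_le hT hA
  have hright := norm_integral_fresnelPhase_le hT hB
  have hcenter := le_re_integral_fresnelPhase_neg_self hT.le
  have hsplit : ∫ x in -A..B, fresnelPhase x = (∫ x in -A..-T, fresnelPhase x) +
      (∫ x in -T..T, fresnelPhase x) + ∫ x in T..B, fresnelPhase x := by
    rw [integral_add_adjacent_intervals (hint _ _) (hint _ _),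
      integral_add_adjacent_intervals (hint _ _) (hint _ _)]
  rw [hsplit]
  refine le_trans ?_ (re_le_norm _)
  simp only [add_re]
  linarith [neg_abs_le (∫ x in -A..-T, fresnelPhase x).re,
    abs_re_le_norm (∫ x in -A..-T, fresnelPhase x),
    neg_abs_le (∫ x in T..B, fresnelPhase x).re, abs_re_le_norm (∫ x in T..B, fresnelPhase x)]

lemma norm_integral_quadratic_phase {N n s a : ℝ} (hs : 0 < s) (hsN : s ^ 2 = 2 * Real.pi * N)
    (hna : 2 * N * a = n) :
    ‖∫ x in (0:ℝ)..1, cexp (2 * Real.pi * I * (N * x ^ 2 - n * x))‖ =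
      s⁻¹ * ‖∫ x in -(s * a)..s * (1 - a), fresnelPhase x‖ := by
  have hphase : ∀ x : ℝ, cexp (2 * Real.pi * I * (N * x ^ 2 - n * x)) =
      cexp (((-(2 * Real.pi * N * a ^ 2) : ℝ) : ℂ) * I) * fresnelPhase (s * x - s * a) := by
    intro x
    rw [fresnelPhase, ← Complex.exp_add]
    congr 1
    have hsN' : (s : ℂ) ^ 2 = 2 * Real.pi * N := by exact_mod_cast hsN
    rw [← hna]
    push_cast
    linear_combination -(x - a) ^ 2 * I * hsN'
  simp_rw [hphase, integral_const_mul, norm_mul, norm_exp_ofReal_mul_I, one_mul,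
    integral_comp_mul_sub fresnelPhase hs.ne', norm_smul, norm_inv, Real.norm_of_nonneg hs.le]
  congr 3 <;> ring

/-- Stationary-phase lower bound: there are `c > 0` and `N₀` such that for every integer
`N ≥ N₀` and every integer `n` with `N/100 ≤ n ≤ N`,
`|∫₀¹ e^{2πi(Nx² − nx)} dx| ≥ c N^{-1/2}`. -/
theorem quadratic_phase_lower_bound :
    ∃ c : ℝ, 0 < c ∧ ∃ N₀ : ℕ, ∀ N : ℕ, N₀ ≤ N → ∀ n : ℤ,
      (N : ℝ) / 100 ≤ (n : ℝ) → (n : ℝ) ≤ (N : ℝ) →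
      c * (N : ℝ) ^ (-(1/2) : ℝ) ≤
        ‖∫ x in (0:ℝ)..1,
            Complex.exp (2 * Real.pi * Complex.I * ((N : ℂ) * (x : ℂ) ^ 2 - (n : ℂ) * (x : ℂ)))‖ := by
  refine ⟨1 / 10, by norm_num, 20000, fun N hN n hn_lo hn_hi => ?_⟩
  have hN : (20000 : ℝ) ≤ N := by exact_mod_cast hN
  have hπ := Real.pi_gt_three
  set s := √(2 * Real.pi * N)
  set a := (n : ℝ) / (2 * N)
  have hs : 0 < s := Real.sqrt_pos.mpr (by positivity)
  have hsN : s ^ 2 = 2 * Real.pi * N := Real.sq_sqrt (by positivity)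
  have hna : 2 * N * a = n := mul_div_cancel₀ _ (by positivity)
  have hs_lo : 260 ≤ s := Real.le_sqrt_of_sq_le (by nlinarith)
  have hs_hi : s ≤ 3 * √N := Real.sqrt_le_iff.mpr
    ⟨by positivity, by rw [mul_pow, Real.sq_sqrt (by positivity)]; nlinarith [Real.pi_lt_d2]⟩
  have ha_lo : 1 / 200 ≤ a := by rw [le_div_iff₀ (by positivity)]; linarith
  have ha_hi : a ≤ 1 / 2 := by rw [div_le_iff₀ (by positivity)]; linarith
  have hfresnel : 3 / 10 ≤ ‖∫ x in -(s * a)..s * (1 - a), fresnelPhase x‖ :=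
    le_trans (by norm_num) (le_norm_integral_fresnelPhase (T := 13 / 10) (by norm_num)
      (by nlinarith) (by nlinarith))
  have hreduce := norm_integral_quadratic_phase hs hsN hna
  push_cast at hreduce
  rw [hreduce, Real.rpow_neg (by positivity), ← Real.sqrt_eq_rpow]
  calc 1 / 10 * (√N)⁻¹ = (3 * √N)⁻¹ * (3 / 10) := by ring
    _ ≤ s⁻¹ * (3 / 10) := by gcongr
    _ ≤ _ := by gcongr
end

section
/- Let n ≥ 1 and 0 < θ < 1/2. There exists a constant C = C(n, θ) with the following property. Let I₁, …, I_n be finite sets, let a_i : I_i → [0, ∞) with M_i := max_{m ∈ I_i} a_i(m) ≤ 1 for each i, and let Λ ⊆ I₁ × … × I_n. Suppose that for all λ₁, …, λ_n > 0, |{ω ∈ Λ : a_i(ω_i) ≥ λ_i for all 1 ≤ i ≤ n}| ≤ ∏_{i=1}^{n} λ_i^{-2θ}. Then ∑_{ω ∈ Λ} ∏_{i=1}^{n} a_i(ω_i) ≤ C ∏_{i=1}^{n} M_i^{1−2θ}. -/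
/-!
Split each `aᵢ` into dyadic layers below its maximum `Mᵢ`:
`a ≤ ∑ₖ (Mᵢ / 2ᵏ) · [a ≥ Mᵢ / 2ᵏ⁺¹]`. Expanding the product over `i` and summing over `Λ`,
the layer `κ ∈ ℕⁿ` contributes `∏ᵢ Mᵢ 2^{-κᵢ}` times the number of `ω ∈ Λ` with
`aᵢ(ωᵢ) ≥ Mᵢ 2^{-κᵢ-1}` for all `i`, which the counting hypothesis bounds by
`∏ᵢ (Mᵢ 2^{-κᵢ-1})^{-2θ}`. Each layer is thus at most `∏ᵢ Mᵢ^{1-2θ} 2^{2θ} (2^{2θ-1})^{κᵢ}`,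
and for `θ < 1/2` the geometric series over `κ` sums to `(2^{2θ} / (1 - 2^{2θ-1}))ⁿ`.
-/

open Finset Filter Topology

namespace SingleScale

theorem le_sum_range_dyadic {a M : ℝ} (ha : 0 ≤ a) (haM : a ≤ M) {N : ℕ}
    (hN : a = 0 ∨ M / 2 ^ N < a) :
    a ≤ ∑ k ∈ range N, if M / 2 ^ (k + 1) ≤ a then M / 2 ^ k else 0 := by
  induction N generalizing M with
  | zero =>
    rcases hN with rfl | hN
    · simp
    · simp only [pow_zero, div_one] at hN
      linarith
  | succ N ih =>
    have hM : 0 ≤ M := ha.trans haM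
    have hterms : ∀ k, 0 ≤ if M / 2 ^ (k + 1) ≤ a then M / 2 ^ k else 0 := fun k => by
      split_ifs <;> positivity
    -- the layers `k + 1` for `M` are the layers `k` for `M / 2`
    rw [sum_range_succ']
    by_cases hhalf : a ≤ M / 2
    · have hrest := ih hhalf (by rwa [div_div, ← pow_succ'])
      simp only [div_div, ← pow_succ'] at hrest
      linarith [hterms 0]
    · push Not at hhalf
      have hfirst : (if M / 2 ^ (0 + 1) ≤ a then M / 2 ^ 0 else 0) = M := by
        simp [hhalf.le]
      linarith [sum_nonneg fun k (_ : k ∈ range N) => hterms (k + 1)]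

theorem exists_forall_eq_zero_or_div_two_pow_lt {ι : Type*} [Finite ι] {I : ι → Type*}
    [∀ i, Finite (I i)] (a : ∀ i, I i → ℝ) (ha : ∀ i m, 0 ≤ a i m) (M : ι → ℝ) :
    ∃ N : ℕ, ∀ i m, a i m = 0 ∨ M i / 2 ^ N < a i m := by
  suffices h : ∀ᶠ N in atTop, ∀ i m, a i m = 0 ∨ M i / 2 ^ N < a i m from h.exists
  refine eventually_all.2 fun i => eventually_all.2 fun m => ?_
  rcases (ha i m).eq_or_lt with h | h
  · exact .of_forall fun _ => .inl h.symm
  have hlim : Tendsto (fun N : ℕ => M i / 2 ^ N) atTop (𝓝 0) := by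
    simpa using tendsto_const_nhds.div_atTop (tendsto_pow_atTop_atTop_of_one_lt one_lt_two)
  exact (hlim.eventually (gt_mem_nhds h)).mono fun _ => .inr

theorem sum_prod_sum_ite_eq {ι K : Type*} [Fintype ι] [DecidableEq ι] {I : ι → Type*}
    (Λ : Finset (∀ i, I i)) (a : ∀ i, I i → ℝ) (s : Finset K) (t w : ι → K → ℝ) :
    ∑ ω ∈ Λ, ∏ i, ∑ k ∈ s, (if t i k ≤ a i (ω i) then w i k else 0) =
      ∑ κ ∈ Fintype.piFinset fun _ => s,
        (∏ i, w i (κ i)) * #{ω ∈ Λ | ∀ i, t i (κ i) ≤ a i (ω i)} := by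
  simp_rw [prod_univ_sum, Fintype.prod_ite_zero]
  rw [sum_comm]
  refine sum_congr rfl fun κ _ => ?_
  rw [← sum_filter, sum_const, nsmul_eq_mul, mul_comm]

theorem rpow_neg_div_two_pow_succ_mul_div_two_pow (θ : ℝ) {M : ℝ} (hM : 0 < M) (k : ℕ) :
    (M / 2 ^ (k + 1)) ^ (-(2 * θ)) * (M / 2 ^ k) =
      M ^ (1 - 2 * θ) * (2 ^ (2 * θ) * ((2 : ℝ) ^ (2 * θ - 1)) ^ k) := by
  refine Real.log_injOn_pos (Set.mem_Ioi.2 (by positivity)) (Set.mem_Ioi.2 (by positivity)) ?_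
  rw [Real.log_mul (by positivity) (by positivity), Real.log_mul (by positivity) (by positivity),
    Real.log_mul (by positivity) (by positivity), Real.log_rpow (by positivity),
    Real.log_rpow hM, Real.log_rpow two_pos, Real.log_pow, Real.log_rpow two_pos,
    Real.log_div hM.ne' (by positivity), Real.log_div hM.ne' (by positivity),
    Real.log_pow, Real.log_pow]
  push_cast
  ring

noncomputable def dyadicConstant (θ : ℝ) : ℝ :=
  2 ^ (2 * θ) / (1 - 2 ^ (2 * θ - 1))

theorem two_rpow_two_mul_sub_one_lt_one {θ : ℝ} (hθ : θ < 1 / 2) :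
    (2 : ℝ) ^ (2 * θ - 1) < 1 :=
  Real.rpow_lt_one_of_one_lt_of_neg one_lt_two (by linarith)

theorem dyadicConstant_pos {θ : ℝ} (hθ : θ < 1 / 2) : 0 < dyadicConstant θ :=
  div_pos (by positivity) (sub_pos.2 (two_rpow_two_mul_sub_one_lt_one hθ))

theorem sum_range_geometric_le_dyadicConstant {θ : ℝ} (hθ : θ < 1 / 2) (N : ℕ) :
    ∑ k ∈ range N, 2 ^ (2 * θ) * ((2 : ℝ) ^ (2 * θ - 1)) ^ k ≤ dyadicConstant θ := by
  rw [← mul_sum, dyadicConstant, div_eq_mul_one_div, range_eq_Ico]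
  gcongr
  simpa using geom_sum_Ico_le_of_lt_one (m := 0) (n := N) (by positivity)
    (two_rpow_two_mul_sub_one_lt_one hθ)

variable {ι : Type*} [Fintype ι] {I : ι → Type*}

def LevelCountBound (θ : ℝ) (a : ∀ i, I i → ℝ) (Λ : Finset (∀ i, I i)) : Prop :=
  ∀ lam : ι → ℝ, (∀ i, 0 < lam i) →
    (#{ω ∈ Λ | ∀ i, lam i ≤ a i (ω i)} : ℝ) ≤ ∏ i, lam i ^ (-(2 * θ))

theorem prod_div_two_pow_mul_card_le {θ : ℝ} {a : ∀ i, I i → ℝ} {Λ : Finset (∀ i, I i)}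
    (hΛ : LevelCountBound θ a Λ) {M : ι → ℝ} (hM : ∀ i, 0 ≤ M i) (κ : ι → ℕ) :
    (∏ i, M i / 2 ^ κ i) * #{ω ∈ Λ | ∀ i, M i / 2 ^ (κ i + 1) ≤ a i (ω i)} ≤
      ∏ i, M i ^ (1 - 2 * θ) * (2 ^ (2 * θ) * ((2 : ℝ) ^ (2 * θ - 1)) ^ κ i) := by
  have hrhs : 0 ≤ ∏ i, M i ^ (1 - 2 * θ) * (2 ^ (2 * θ) * ((2 : ℝ) ^ (2 * θ - 1)) ^ κ i) :=
    prod_nonneg fun i _ => mul_nonneg (Real.rpow_nonneg (hM i) _) (by positivity)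
  by_cases hpos : ∀ i, 0 < M i
  · calc (∏ i, M i / 2 ^ κ i) * #{ω ∈ Λ | ∀ i, M i / 2 ^ (κ i + 1) ≤ a i (ω i)}
        ≤ (∏ i, M i / 2 ^ κ i) * ∏ i, (M i / 2 ^ (κ i + 1)) ^ (-(2 * θ)) := by
          gcongr
          · exact prod_nonneg fun i _ => div_nonneg (hM i) (by positivity)
          · exact hΛ _ fun i => div_pos (hpos i) (by positivity)
      _ = _ := by
          rw [mul_comm, ← prod_mul_distrib]
          exact prod_congr rfl fun i _ =>
            rpow_neg_div_two_pow_succ_mul_div_two_pow θ (hpos i) (κ i)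
  · obtain ⟨i, hi⟩ : ∃ i, M i = 0 := by
      push Not at hpos
      obtain ⟨i, hi⟩ := hpos
      exact ⟨i, le_antisymm hi (hM i)⟩
    rwa [prod_eq_zero (mem_univ i) (by simp [hi]), zero_mul]

theorem sum_prod_le_of_levelCountBound [DecidableEq ι] [∀ i, Fintype (I i)] {θ : ℝ}
    (hθ : θ < 1 / 2) {a : ∀ i, I i → ℝ} (ha : ∀ i m, 0 ≤ a i m) {Λ : Finset (∀ i, I i)}
    (hΛ : LevelCountBound θ a Λ) :
    ∑ ω ∈ Λ, ∏ i, a i (ω i) ≤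
      dyadicConstant θ ^ Fintype.card ι * ∏ i, (⨆ m, a i m) ^ (1 - 2 * θ) := by
  set M : ι → ℝ := fun i => ⨆ m, a i m
  have haM : ∀ i m, a i m ≤ M i := fun i m => le_ciSup (Set.finite_range _).bddAbove m
  have hM : ∀ i, 0 ≤ M i := fun i => Real.iSup_nonneg (ha i)
  obtain ⟨N, hN⟩ := exists_forall_eq_zero_or_div_two_pow_lt a ha M
  calc ∑ ω ∈ Λ, ∏ i, a i (ω i)
      ≤ ∑ ω ∈ Λ, ∏ i, ∑ k ∈ range N,
          (if M i / 2 ^ (k + 1) ≤ a i (ω i) then M i / 2 ^ k else 0) :=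
        sum_le_sum fun ω _ => prod_le_prod (fun i _ => ha i (ω i)) fun i _ =>
          le_sum_range_dyadic (ha i (ω i)) (haM i (ω i)) (hN i (ω i))
    _ = ∑ κ ∈ Fintype.piFinset fun _ => range N,
          (∏ i, M i / 2 ^ κ i) * #{ω ∈ Λ | ∀ i, M i / 2 ^ (κ i + 1) ≤ a i (ω i)} :=
        sum_prod_sum_ite_eq Λ a _ (fun i k => M i / 2 ^ (k + 1)) fun i k => M i / 2 ^ k
    _ ≤ ∑ κ ∈ Fintype.piFinset fun _ => range N,
          ∏ i, M i ^ (1 - 2 * θ) * (2 ^ (2 * θ) * ((2 : ℝ) ^ (2 * θ - 1)) ^ κ i) :=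
        sum_le_sum fun κ _ => prod_div_two_pow_mul_card_le hΛ hM κ
    _ = ∏ i, M i ^ (1 - 2 * θ) *
          ∑ k ∈ range N, 2 ^ (2 * θ) * ((2 : ℝ) ^ (2 * θ - 1)) ^ k := by
        simp_rw [mul_sum]
        exact sum_prod_piFinset (range N) fun i k => M i ^ (1 - 2 * θ) * (2 ^ (2 * θ) * _ ^ k)
    _ ≤ ∏ i, M i ^ (1 - 2 * θ) * dyadicConstant θ := by
        gcongr with i
        · exact fun i _ =>
            mul_nonneg (Real.rpow_nonneg (hM i) _) (sum_nonneg fun k _ => by positivity)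
        · exact Real.rpow_nonneg (hM i) _
        · exact sum_range_geometric_le_dyadicConstant hθ N
    _ = dyadicConstant θ ^ Fintype.card ι * ∏ i, M i ^ (1 - 2 * θ) := by
        rw [prod_mul_distrib, prod_const, card_univ, mul_comm]

end SingleScale

open SingleScale in
theorem single_scale_summation_general (n : ℕ) (θ : ℝ) (hθ : θ < 1 / 2) :
    ∃ C : ℝ, 0 < C ∧
      ∀ (I : Fin n → Type) [∀ i, Fintype (I i)] (a : ∀ i, I i → ℝ),
        (∀ i m, 0 ≤ a i m) → (∀ i m, a i m ≤ 1) →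
        ∀ Λ : Finset (∀ i, I i),
          (∀ lam : Fin n → ℝ, (∀ i, 0 < lam i) →
            (Nat.card {ω : ∀ i, I i // ω ∈ Λ ∧ ∀ i, lam i ≤ a i (ω i)} : ℝ) ≤
              ∏ i, lam i ^ (-(2 * θ))) →
          ∑ ω ∈ Λ, ∏ i, a i (ω i) ≤ C * ∏ i, (⨆ m, a i m) ^ (1 - 2 * θ) := by
  refine ⟨dyadicConstant θ ^ n, pow_pos (dyadicConstant_pos hθ) n, fun I _ a ha _ Λ hΛ => ?_⟩
  have hcount : LevelCountBound θ a Λ := fun lam hlam => by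
    convert hΛ lam hlam using 2
    rw [← Nat.card_eq_finsetCard]
    congr
    ext
    simp
  simpa using sum_prod_le_of_levelCountBound hθ ha hcount

/-- Abstract single-scale summation lemma: if `0 < θ < 1/2`, the `aᵢ` take values in
`[0,1]`, and the level sets of `Λ` satisfy
`#{ω ∈ Λ : aᵢ(ωᵢ) ≥ λᵢ ∀i} ≤ ∏ᵢ λᵢ^{-2θ}` for all `λᵢ > 0`, then
`∑_{ω ∈ Λ} ∏ᵢ aᵢ(ωᵢ) ≤ C ∏ᵢ Mᵢ^{1−2θ}` where `Mᵢ = max aᵢ`. -/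
theorem single_scale_summation (n : ℕ) (hn : 1 ≤ n) (θ : ℝ) (hθ0 : 0 < θ) (hθ : θ < 1 / 2) :
    ∃ C : ℝ, 0 < C ∧
      ∀ (I : Fin n → Type) [∀ i, Fintype (I i)] (a : ∀ i, I i → ℝ),
        (∀ i m, 0 ≤ a i m) → (∀ i m, a i m ≤ 1) →
        ∀ Λ : Finset (∀ i, I i),
          (∀ lam : Fin n → ℝ, (∀ i, 0 < lam i) →
            (Nat.card {ω : ∀ i, I i // ω ∈ Λ ∧ ∀ i, lam i ≤ a i (ω i)} : ℝ) ≤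
              ∏ i, lam i ^ (-(2 * θ))) →
          ∑ ω ∈ Λ, ∏ i, a i (ω i) ≤ C * ∏ i, (⨆ m, a i m) ^ (1 - 2 * θ) :=
  single_scale_summation_general n θ hθ
end
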